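/- Let M be a finitely generated ℤ-graded R-module and h an integer, and let M(h) be the shifted graded module with M(h)_n = M_{n+h}. Then: (1) for every compact subset A ⊆ ℂ there exists a constant D such that for all y ∈ A and all n, |F_n(M(h),R,I,d)(y) − F_n(M,R,I,d)(y)| ≤ (D/p^n)·|F_n(M,R,I,d)(y)|; and (2) for every complex number y, the sequence (F_n(M,R,I,d)(y))_n converges if and only if (F_n(M(h),R,I,d)(y))_n converges, and when either converges the limits are equal. -/

import Mathlib

open Filter Complex

noncomputable section

/-- The Frobenius bracket power `I^{[q]}` of an ideal. -/
def bracketPow {R : Type*} [CommSemiring R] (I : Ideal R) (q : ℕ) : Ideal R :=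
  Ideal.span ((fun x : R => x ^ q) '' (I : Set R))

/-- `λ_k((M/N)_j)`. -/
def quotPieceDim (k : Type*) {R M : Type*} [Field k] [CommRing R] [Algebra k R]
    [AddCommGroup M] [Module R M] [Module k M] [IsScalarTower k R M]
    (ℳ : ℤ → Submodule k M) (N : Submodule R M) (j : ℤ) : ℕ :=
  Module.finrank k ((ℳ j).map (N.mkQ.restrictScalars k))

/-- `F_n(M,R,I,d)(y)`. -/
def FnGen (k : Type*) {R M : Type*} [Field k] [CommRing R] [Algebra k R]
    [AddCommGroup M] [Module R M] [Module k M] [IsScalarTower k R M]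
    (ℳ : ℤ → Submodule k M) (I : Ideal R) (p d n : ℕ) (y : ℂ) : ℂ :=
  (1 / (p : ℂ) ^ n) ^ d *
    ∑' j : ℤ, (quotPieceDim k (R := R) ℳ (bracketPow I (p ^ n) • ⊤) j : ℂ) *
      Complex.exp (-Complex.I * y * (j : ℂ) / (p : ℂ) ^ n)

/-! Shifting the grading by `h` reindexes the series defining `F_n` by `j ↦ j + h`, so
`F_n(M(h))(y) = exp (i y h / pⁿ) · F_n(M)(y)`; this holds even when the series diverges, as
`tsum` is then `0` on both sides. The exponent is `O(p⁻ⁿ)` uniformly for `y` in a compact set,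
and `‖exp z - 1‖ ≤ ‖z‖ exp ‖z‖` gives (1); the factor tends to `1`, which gives (2). -/

lemma tsum_shift_mul_exp (f : ℤ → ℂ) (w : ℂ) (h : ℤ) :
    ∑' j : ℤ, f (j + h) * exp (-w * j) = exp (w * h) * ∑' j : ℤ, f j * exp (-w * j) := by
  rw [← tsum_mul_left,
    ← (Equiv.addRight h).tsum_eq (fun j => exp (w * h) * (f j * exp (-w * j)))]
  refine tsum_congr fun j => ?_
  have hexp : exp (-w * j) = exp (w * h) * exp (-w * ((j + h : ℤ) : ℂ)) := by
    rw [← exp_add]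
    congr 1
    push_cast
    ring
  rw [Equiv.coe_addRight, hexp]
  ring

lemma FnGen_shift (k : Type*) {R M : Type*} [Field k] [CommRing R] [Algebra k R]
    [AddCommGroup M] [Module R M] [Module k M] [IsScalarTower k R M]
    (ℳ : ℤ → Submodule k M) (I : Ideal R) (p d n : ℕ) (y : ℂ) (h : ℤ) :
    FnGen k (R := R) (fun t : ℤ => ℳ (t + h)) I p d n y =
      exp (Complex.I * y * h / (p : ℂ) ^ n) * FnGen k (R := R) ℳ I p d n y := by
  have hexponent : ∀ j : ℂ,
      -Complex.I * y * j / (p : ℂ) ^ n = -(Complex.I * y / (p : ℂ) ^ n) * j := fun j => by ring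
  have hfactor : Complex.I * y * h / (p : ℂ) ^ n = Complex.I * y / (p : ℂ) ^ n * h := by ring
  simp only [FnGen, hexponent, hfactor]
  rw [mul_left_comm (exp _), ← tsum_shift_mul_exp]
  rfl

lemma norm_exp_div_sub_one_le {c : ℂ} {C q : ℝ} (hc : ‖c‖ ≤ C) (hq : 1 ≤ q) :
    ‖exp (c / q) - 1‖ ≤ C * Real.exp C / q := by
  have hq0 : 0 < q := one_pos.trans_le hq
  have hcq : ‖c / q‖ ≤ C / q := by
    rw [norm_div, norm_real, Real.norm_of_nonneg hq0.le]
    gcongr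
  have hC : 0 ≤ C := (norm_nonneg c).trans hc
  calc ‖exp (c / q) - 1‖ ≤ ‖c / q‖ * Real.exp ‖c / q‖ := by
        simpa using norm_exp_sub_sum_le_norm_mul_exp (c / q) 1
    _ ≤ C / q * Real.exp C := by
        gcongr
        exact hcq.trans (div_le_self hC hq)
    _ = C * Real.exp C / q := by ring

lemma tendsto_exp_div_pow_nhds_one (c : ℂ) {p : ℕ} (hp : 1 < p) :
    Tendsto (fun n : ℕ => exp (c / (p : ℂ) ^ n)) atTop (nhds 1) := by
  have hinv : Tendsto (fun n : ℕ => ((p : ℂ)⁻¹) ^ n) atTop (nhds 0) := by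
    apply tendsto_pow_atTop_nhds_zero_of_norm_lt_one
    rw [norm_inv, norm_natCast]
    exact inv_lt_one_of_one_lt₀ (by exact_mod_cast hp)
  have hdiv : Tendsto (fun n : ℕ => c / (p : ℂ) ^ n) atTop (nhds 0) := by
    simpa [div_eq_mul_inv, inv_pow] using hinv.const_mul c
  simpa [Function.comp_def] using (continuous_exp.tendsto 0).comp hdiv

theorem frobenius_poincare_shift_invariance_general
    (k R M : Type) [Field k] [CommRing R] [Algebra k R]
    (p : ℕ) (hp : p.Prime)
    (I : Ideal R)
    [AddCommGroup M] [Module R M] [Module k M] [IsScalarTower k R M]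
    (ℳ : ℤ → Submodule k M)
    (d : ℕ) (h : ℤ) :
    (∀ A : Set ℂ, IsCompact A → ∃ D : ℝ, ∀ y ∈ A, ∀ n : ℕ,
        ‖FnGen k (fun t : ℤ => ℳ (t + h)) I p d n y - FnGen k ℳ I p d n y‖ ≤
          D / (p : ℝ) ^ n * ‖FnGen k ℳ I p d n y‖) ∧
    (∀ y : ℂ, ∀ L : ℂ,
        Tendsto (fun n : ℕ => FnGen k ℳ I p d n y) atTop (nhds L) ↔
        Tendsto (fun n : ℕ => FnGen k (fun t : ℤ => ℳ (t + h)) I p d n y) atTop (nhds L)) := by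
  simp only [FnGen_shift]
  constructor
  · intro A hA
    obtain ⟨C, hC⟩ := (hA.image (f := fun y : ℂ => Complex.I * y * h) (by fun_prop)).isBounded
      |>.exists_norm_le
    refine ⟨C * Real.exp C, fun y hy n => ?_⟩
    rw [← sub_one_mul, norm_mul]
    gcongr
    exact_mod_cast norm_exp_div_sub_one_le (q := (p : ℝ) ^ n) (hC _ ⟨y, hy, rfl⟩)
      (one_le_pow₀ (by exact_mod_cast hp.one_lt.le))
  · intro y L
    simp_rw [mul_comm (exp _)]
    rw [← tendsto_mul_iff_of_ne_zero (tendsto_exp_div_pow_nhds_one _ hp.one_lt) one_ne_zero,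
      mul_one]

/-- **Invariance of the Frobenius–Poincaré limit under grading shifts.**  Let `M(h)`
denote `M` with the shifted grading `M(h)_n = M_{n+h}`.  Then (1) on every compact
`A ⊆ ℂ` one has `|F_n(M(h),d)(y) - F_n(M,d)(y)| ≤ (D/pⁿ)|F_n(M,d)(y)|` for some
constant `D`, and (2) for each `y`, `F_n(M,d)(y)` and `F_n(M(h),d)(y)` converge
together, with the same limit. -/
theorem frobenius_poincare_shift_invariance
    (k R M : Type) [Field k] [CommRing R] [Algebra k R] [Algebra.FiniteType k R]
    (p : ℕ) (hp : p.Prime) [CharP R p]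
    (𝒜 : ℤ → Submodule k R) [GradedAlgebra 𝒜]
    (h𝒜neg : ∀ t : ℤ, t < 0 → 𝒜 t = ⊥)
    (h𝒜zero : ∀ x ∈ 𝒜 0, ∃ c : k, algebraMap k R c = x)
    (I : Ideal R) (hI : Ideal.IsHomogeneous 𝒜 I) (hIfl : IsFiniteLength R (R ⧸ I))
    [AddCommGroup M] [Module R M] [Module k M] [IsScalarTower k R M] [Module.Finite R M]
    (ℳ : ℤ → Submodule k M) [DirectSum.Decomposition ℳ]
    (hℳ : ∀ (a b : ℤ), ∀ r ∈ 𝒜 a, ∀ x ∈ ℳ b, r • x ∈ ℳ (a + b))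
    (d : ℕ) (h : ℤ) :
    (∀ A : Set ℂ, IsCompact A → ∃ D : ℝ, ∀ y ∈ A, ∀ n : ℕ,
        ‖FnGen k (fun t : ℤ => ℳ (t + h)) I p d n y - FnGen k ℳ I p d n y‖ ≤
          D / (p : ℝ) ^ n * ‖FnGen k ℳ I p d n y‖) ∧
    (∀ y : ℂ, ∀ L : ℂ,
        Tendsto (fun n : ℕ => FnGen k ℳ I p d n y) atTop (nhds L) ↔
        Tendsto (fun n : ℕ => FnGen k (fun t : ℤ => ℳ (t + h)) I p d n y) atTop (nhds L)) :=
  frobenius_poincare_shift_invariance_general k R M p hp I ℳ d h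

end
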